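/- arXiv:2010.12106 — 4 statements merged into one kernel-verified Lean document; each statement's English description precedes it below -/
import Mathlib

section
/- For real numbers S, I with S ≥ 0, I ≥ 0, S + I ≤ 1, and positive reals α₁, α₂, the determinant of the 2×2 symmetric matrix Q(S,I) = [[2(1−SI)α₁α₂, (α₁²+α₂+1)SI − α₁α₂I], [(α₁²+α₂+1)SI − α₁α₂I, 2(α₁α₂ + (α₁²+α₂+1)I)]] satisfies det Q(S,I) ≥ 2α₁²α₂² − (1/16)(α₁²+α₂+1)². -/
lemma Q_aux (P J a b : ℝ) (hP0 : 0 ≤ P) (hP : P ≤ 1 / 4) (hJ0 : 0 ≤ J) (hJ1 : J ≤ 1)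
    (ha : 0 < a) (hb : 0 < b) :
    2 * a ^ 2 - (1 / 16) * b ^ 2 ≤ 4 * (1 - P) * a * (a + b * J) - (b * P - a * J) ^ 2 := by
  have k1 : (b * P - a * J) ^ 2 ≤ (b * P) ^ 2 + (a * J) ^ 2 := by
    nlinarith [mul_nonneg (mul_nonneg hb.le hP0) (mul_nonneg ha.le hJ0)]
  have k2 : (b * P) ^ 2 ≤ (1 / 16) * b ^ 2 := by
    have h16 : P ^ 2 ≤ 1 / 16 := by nlinarith
    calc (b * P) ^ 2 = b ^ 2 * P ^ 2 := by ring
      _ ≤ b ^ 2 * (1 / 16) := by nlinarith [sq_nonneg b]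
      _ = (1 / 16) * b ^ 2 := by ring
  have k3 : (a * J) ^ 2 ≤ a ^ 2 * J := by
    nlinarith [mul_nonneg (sq_nonneg a) (mul_nonneg hJ0 (sub_nonneg.2 hJ1))]
  have k4 : 3 * a * (a + b * J) ≤ 4 * (1 - P) * a * (a + b * J) := by
    have hpos : 0 ≤ a * (a + b * J) := by positivity
    nlinarith [mul_nonneg hpos (by linarith : (0:ℝ) ≤ 1 / 4 - P)]
  have k5 : a ^ 2 * J ≤ a ^ 2 + 3 * a * (b * J) := by
    nlinarith [mul_nonneg (sq_nonneg a) (sub_nonneg.2 hJ1),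
      mul_nonneg (mul_nonneg ha.le hb.le) hJ0]
  nlinarith [k1, k2, k3, k4, k5]

theorem Q_det_lower_bound (S I α₁ α₂ : ℝ) (hS : 0 ≤ S) (hI : 0 ≤ I) (hSI : S + I ≤ 1)
    (h₁ : 0 < α₁) (h₂ : 0 < α₂) :
    (!![2 * (1 - S * I) * α₁ * α₂, (α₁ ^ 2 + α₂ + 1) * S * I - α₁ * α₂ * I;
        (α₁ ^ 2 + α₂ + 1) * S * I - α₁ * α₂ * I,
        2 * (α₁ * α₂ + (α₁ ^ 2 + α₂ + 1) * I)] : Matrix (Fin 2) (Fin 2) ℝ).det ≥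
      2 * α₁ ^ 2 * α₂ ^ 2 - (1 / 16) * (α₁ ^ 2 + α₂ + 1) ^ 2 := by
  rw [Matrix.det_fin_two_of]
  have hI1 : I ≤ 1 := by linarith
  have hP : S * I ≤ 1 / 4 := by nlinarith [sq_nonneg (S - I)]
  have key := Q_aux (S * I) I (α₁ * α₂) (α₁ ^ 2 + α₂ + 1) (mul_nonneg hS hI) hP hI hI1
    (mul_pos h₁ h₂) (by positivity)
  calc 2 * α₁ ^ 2 * α₂ ^ 2 - (1 / 16) * (α₁ ^ 2 + α₂ + 1) ^ 2
      = 2 * (α₁ * α₂) ^ 2 - (1 / 16) * (α₁ ^ 2 + α₂ + 1) ^ 2 := by ring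
    _ ≤ 4 * (1 - S * I) * (α₁ * α₂) * ((α₁ * α₂) + (α₁ ^ 2 + α₂ + 1) * I)
        - ((α₁ ^ 2 + α₂ + 1) * (S * I) - (α₁ * α₂) * I) ^ 2 := key
    _ = 2 * (1 - S * I) * α₁ * α₂ * (2 * (α₁ * α₂ + (α₁ ^ 2 + α₂ + 1) * I)) -
        ((α₁ ^ 2 + α₂ + 1) * S * I - α₁ * α₂ * I) *
        ((α₁ ^ 2 + α₂ + 1) * S * I - α₁ * α₂ * I) := by ring
end

section
/- If α₁ > 1/(4√2) and α₂ > (α₁² + 1)/(4√2·α₁ − 1), then 2α₁²α₂² − (1/16)(α₁² + α₂ + 1)² > 0. -/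
theorem gain_tuning_positivity (α₁ α₂ : ℝ)
    (h₁ : α₁ > 1 / (4 * Real.sqrt 2))
    (h₂ : α₂ > (α₁ ^ 2 + 1) / (4 * Real.sqrt 2 * α₁ - 1)) :
    2 * α₁ ^ 2 * α₂ ^ 2 - (1 / 16) * (α₁ ^ 2 + α₂ + 1) ^ 2 > 0 := by
  set s := Real.sqrt 2 with hs
  have hs2 : s ^ 2 = 2 := Real.sq_sqrt (by norm_num)
  have hspos : (0:ℝ) < s := Real.sqrt_pos.mpr (by norm_num)
  have hα₁ : 0 < α₁ := lt_trans (by positivity) h₁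
  have hden : 0 < 4 * s * α₁ - 1 := by
    have := (div_lt_iff₀ (by positivity : (0:ℝ) < 4 * s)).mp h₁
    nlinarith
  have hkey : α₁ ^ 2 + 1 < α₂ * (4 * s * α₁ - 1) :=
    (div_lt_iff₀ hden).mp h₂
  have hα₂ : 0 < α₂ := by nlinarith
  have h3 : α₁ ^ 2 + α₂ + 1 < 4 * s * α₁ * α₂ := by nlinarith
  have hpos : 0 < α₁ ^ 2 + α₂ + 1 := by positivity
  have h4 : (α₁ ^ 2 + α₂ + 1) ^ 2 < (4 * s * α₁ * α₂) ^ 2 := by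
    apply sq_lt_sq' _ h3
    nlinarith
  nlinarith [sq_nonneg s]
end

section
/- Under the hypotheses α₁ > 1/(4√2), α₂ > (α₁²+1)/(4√2·α₁−1), S ≥ 0, I ≥ 0, S + I ≤ 1, the matrix Q(S,I) = [[2(1−SI)α₁α₂, (α₁²+α₂+1)SI − α₁α₂I], [(α₁²+α₂+1)SI − α₁α₂I, 2(α₁α₂ + (α₁²+α₂+1)I)]] is positive definite. -/
lemma quad_form_pos (A B C a b : ℝ) (hA : 0 < A) (hdet : 0 < A * C - B ^ 2)
    (hab : a ≠ 0 ∨ b ≠ 0) : 0 < A * a ^ 2 + 2 * B * a * b + C * b ^ 2 := by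
  have key : A * (A * a ^ 2 + 2 * B * a * b + C * b ^ 2) =
      (A * a + B * b) ^ 2 + (A * C - B ^ 2) * b ^ 2 := by ring
  have hAQ : 0 < A * (A * a ^ 2 + 2 * B * a * b + C * b ^ 2) := by
    rw [key]
    rcases eq_or_ne b 0 with hb0 | hb0
    · have ha0 : a ≠ 0 := by tauto
      rw [hb0]
      have he : (A * a + B * 0) ^ 2 + (A * C - B ^ 2) * 0 ^ 2 = A ^ 2 * a ^ 2 := by ring
      rw [he]
      positivity
    · have : b ^ 2 > 0 := by positivity
      nlinarith [sq_nonneg (A * a + B * b), mul_pos hdet this]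
  nlinarith

lemma posdef_2x2 (A B C : ℝ) (hA : 0 < A) (hdet : 0 < A * C - B ^ 2) :
    (!![A, B; B, C] : Matrix (Fin 2) (Fin 2) ℝ).PosDef := by
  rw [Matrix.posDef_iff_dotProduct_mulVec]
  constructor
  · rw [Matrix.IsHermitian]
    ext i j
    fin_cases i <;> fin_cases j <;> simp [Matrix.conjTranspose_apply]
  · intro x hx
    have hab : x 0 ≠ 0 ∨ x 1 ≠ 0 := by
      by_contra h
      push_neg at h
      exact hx (by ext i; fin_cases i <;> simp [h.1, h.2])
    have hgoal : dotProduct (star x) ((!![A, B; B, C] : Matrix (Fin 2) (Fin 2) ℝ).mulVec x)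
        = A * (x 0) ^ 2 + 2 * B * (x 0) * (x 1) + C * (x 1) ^ 2 := by
      simp [Matrix.mulVec, dotProduct, Fin.sum_univ_two]
      ring
    rw [hgoal]
    exact quad_form_pos A B C (x 0) (x 1) hA hdet hab

theorem Q_posdef (S I α₁ α₂ : ℝ)
    (h₁ : α₁ > 1 / (4 * Real.sqrt 2))
    (h₂ : α₂ > (α₁ ^ 2 + 1) / (4 * Real.sqrt 2 * α₁ - 1))
    (hS : 0 ≤ S) (hI : 0 ≤ I) (hSI : S + I ≤ 1) :
    (!![2 * (1 - S * I) * α₁ * α₂, (α₁ ^ 2 + α₂ + 1) * S * I - α₁ * α₂ * I;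
        (α₁ ^ 2 + α₂ + 1) * S * I - α₁ * α₂ * I,
        2 * (α₁ * α₂ + (α₁ ^ 2 + α₂ + 1) * I)] : Matrix (Fin 2) (Fin 2) ℝ).PosDef := by
  have hr2 : (Real.sqrt 2) ^ 2 = 2 := Real.sq_sqrt (by norm_num)
  have hr1 : (1:ℝ) ≤ Real.sqrt 2 := by nlinarith [Real.sqrt_nonneg 2]
  have hα₁ : 0 < α₁ := lt_trans (by positivity) h₁
  have hden : 0 < 4 * Real.sqrt 2 * α₁ - 1 := by
    have := (div_lt_iff₀ (by positivity : (0:ℝ) < 4 * Real.sqrt 2)).mp h₁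
    linarith
  have hα₂' : (α₁ ^ 2 + 1) < α₂ * (4 * Real.sqrt 2 * α₁ - 1) := by
    have := (div_lt_iff₀ hden).mp h₂
    linarith
  have hα₂ : 0 < α₂ := by nlinarith
  have hK : α₁ ^ 2 + α₂ + 1 < 4 * Real.sqrt 2 * (α₁ * α₂) := by nlinarith
  have hKpos : 0 < α₁ ^ 2 + α₂ + 1 := by positivity
  have hK2 : (α₁ ^ 2 + α₂ + 1) ^ 2 < 32 * (α₁ * α₂) ^ 2 := by nlinarith
  have hs0 : 0 ≤ S * I := mul_nonneg hS hI
  have hsI : S * I ≤ 1 / 4 := by nlinarith [sq_nonneg (S - I)]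
  have hI1 : I ≤ 1 := by linarith
  have hPpos : 0 < α₁ * α₂ := by positivity
  have hA : 0 < 2 * (1 - S * I) * α₁ * α₂ := by nlinarith
  apply posdef_2x2
  · exact hA
  · have hexp : 2 * (1 - S * I) * α₁ * α₂ * (2 * (α₁ * α₂ + (α₁ ^ 2 + α₂ + 1) * I)) -
        ((α₁ ^ 2 + α₂ + 1) * S * I - α₁ * α₂ * I) ^ 2 =
        4 * (1 - S * I) * (α₁ * α₂) ^ 2
          + (α₁ * α₂) * (α₁ ^ 2 + α₂ + 1) * I * (4 - 2 * (S * I))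
          - (α₁ ^ 2 + α₂ + 1) ^ 2 * (S * I) ^ 2 - (α₁ * α₂) ^ 2 * I ^ 2 := by
      ring
    rw [hexp]
    have h2a : (α₁ ^ 2 + α₂ + 1) ^ 2 * (S * I) ^ 2 ≤ (α₁ ^ 2 + α₂ + 1) ^ 2 * (1 / 16) := by
      have hsq : (S * I) ^ 2 ≤ 1 / 16 := by nlinarith
      exact mul_le_mul_of_nonneg_left hsq (sq_nonneg _)
    have h2c : (α₁ * α₂) ^ 2 * I ^ 2 ≤ (α₁ * α₂) ^ 2 := by
      have hI2 : I ^ 2 ≤ 1 := by nlinarith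
      calc (α₁ * α₂) ^ 2 * I ^ 2 ≤ (α₁ * α₂) ^ 2 * 1 :=
            mul_le_mul_of_nonneg_left hI2 (sq_nonneg _)
        _ = (α₁ * α₂) ^ 2 := mul_one _
    have h2d : 0 ≤ (α₁ * α₂) * (α₁ ^ 2 + α₂ + 1) * I * (4 - 2 * (S * I)) := by
      apply mul_nonneg
      · exact mul_nonneg (mul_nonneg hPpos.le hKpos.le) hI
      · linarith
    have h2e : 3 * (α₁ * α₂) ^ 2 ≤ 4 * (1 - S * I) * (α₁ * α₂) ^ 2 := by
      have h3 : (3:ℝ) ≤ 4 * (1 - S * I) := by linarith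
      exact mul_le_mul_of_nonneg_right h3 (sq_nonneg _)
    linarith
end

section
/- For any real numbers S, I with 0 ≤ S ≤ 1 and 0 ≤ I ≤ Ī (where 0 < Ī ≤ 1), the matrix A₀ = [[0, 1], [−S·I, −I]] lies in the convex hull of the three matrices C₁ = [[0,1],[0,0]], C₂ = [[0,1],[0,−Ī]], C₃ = [[0,1],[−Ī,−Ī]]. -/
theorem A0_in_convex_hull (S I Ibar : ℝ) (hS0 : 0 ≤ S) (hS1 : S ≤ 1)
    (hI0 : 0 ≤ I) (hI : I ≤ Ibar) (hIbar0 : 0 < Ibar) (hIbar1 : Ibar ≤ 1) :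
    ∃ c₁ c₂ c₃ : ℝ, 0 ≤ c₁ ∧ 0 ≤ c₂ ∧ 0 ≤ c₃ ∧ c₁ + c₂ + c₃ = 1 ∧
      (!![0, 1; -(S * I), -I] : Matrix (Fin 2) (Fin 2) ℝ) =
        c₁ • !![0, 1; 0, 0] + c₂ • !![0, 1; 0, -Ibar] + c₃ • !![0, 1; -Ibar, -Ibar] := by
  have hne : Ibar ≠ 0 := ne_of_gt hIbar0
  refine ⟨1 - I / Ibar, I * (1 - S) / Ibar, S * I / Ibar, ?_, ?_, ?_, ?_, ?_⟩
  · have : I / Ibar ≤ 1 := (div_le_one hIbar0).mpr hI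
    linarith
  · exact div_nonneg (mul_nonneg hI0 (by linarith)) hIbar0.le
  · positivity
  · field_simp; ring
  · ext i j
    fin_cases i <;> fin_cases j <;>
      simp [Matrix.smul_apply, Matrix.add_apply] <;> field_simp <;> ring
end
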